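/- For any uniformity ℰ on ω₁ compatible with the order topology, every uniform open cover of ω₁ contains an element whose complement is countable. Consequently ω₁ is uniform-Rothberger with respect to ℰ: for every sequence ⟨𝒰_n : n ∈ ω⟩ of uniform open covers, there exist U_n ∈ 𝒰_n with ⋃_n U_n = ω₁. -/

import Mathlib

open Ordinal in
/-- The first uncountable ordinal, as a type. -/
def Omega1 : Type 1 := {o : Ordinal // o < ω₁}

noncomputable instance : LinearOrder Omega1 := Subtype.instLinearOrder _

/-- The order topology on `ω₁`. -/
noncomputable def omega1OrderTopology : TopologicalSpace Omega1 := Preorder.topology Omega1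

/-!
A uniform cover is refined by the balls `E[x]`, so it suffices to find a single ball that is
co-countable. Take `V` symmetric with `V ○ V ⊆ E`; every non-minimal `x` has an interval
`(F x, x]` inside `V[x]`, and `F` is regressive. By a weak pressing-down lemma (using only that
countable subsets of `ω₁` are bounded) some sublevel set `{x | F x ≤ c}` is unbounded. Any two
points above `c` then lie in a common interval `(F x, x]`, hence are `V ○ V`-close, so the ball
`E[x₀]` around a point `x₀ > c` contains the final segment `(c, ω₁)`, whose complement is countable.
For the Rothberger property pick such a co-countable member of `𝒰 0` and cover the countably many
remaining points with one member of each `𝒰 (n + 1)`.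
-/

open Set Filter Topology Uniformity UniformSpace

theorem exists_not_bddAbove_preimage_Iic_of_lt_self {α : Type*} [LinearOrder α] [NoMaxOrder α]
    [Nonempty α] (hsup : ∀ β : ℕ → α, ∃ b, IsLUB (range β) b) {F : α → α}
    (hF : ∀ x, ¬IsMin x → F x < x) : ∃ c, ¬BddAbove (F ⁻¹' Iic c) := by
  by_contra! hbdd
  choose g hg using hbdd
  choose above lt_above using fun x : α => exists_gt x
  set β : ℕ → α := fun n => (fun b => above (max b (g b)))^[n] (Classical.arbitrary α)
  have hβ_succ (n : ℕ) : β (n + 1) = above (max (β n) (g (β n))) :=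
    Function.iterate_succ_apply' ..
  have hβ_lt (n : ℕ) : β n < β (n + 1) :=
    hβ_succ n ▸ (le_max_left _ _).trans_lt (lt_above _)
  have hg_lt (n : ℕ) : g (β n) < β (n + 1) :=
    hβ_succ n ▸ (le_max_right _ _).trans_lt (lt_above _)
  obtain ⟨b, hb⟩ := hsup β
  have hβ_le (n : ℕ) : β n ≤ b := hb.1 (mem_range_self n)
  have hb_not_min : ¬IsMin b := not_isMin_of_lt ((hβ_lt 0).trans_le (hβ_le 1))
  obtain ⟨_, ⟨n, rfl⟩, hn⟩ := (lt_isLUB_iff hb).1 (hF b hb_not_min)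
  have hb_le : b ≤ g (β n) := hg (β n) (mem_preimage.2 hn.le)
  exact (hb_le.trans_lt (hg_lt n)).not_ge (hβ_le (n + 1))

theorem exists_ball_mem_atTop {α : Type*} [LinearOrder α] [NoMaxOrder α] [Nonempty α]
    [UniformSpace α] [OrderTopology α] (hsup : ∀ β : ℕ → α, ∃ b, IsLUB (range β) b)
    {E : SetRel α α} (hE : E ∈ 𝓤 α) : ∃ x₀, ball x₀ E ∈ atTop := by
  obtain ⟨V, hV, hV_symm, hVE⟩ := comp_symm_mem_uniformity_sets hE
  have hinterval (x : α) : ∃ l, ¬IsMin x → l < x ∧ Ioc l x ⊆ ball x V := by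
    by_cases hx : IsMin x
    · exact ⟨x, absurd hx⟩
    · obtain ⟨l, hl, hsub⟩ :=
        exists_Ioc_subset_of_mem_nhds (ball_mem_nhds x hV) (not_isMin_iff.1 hx)
      exact ⟨l, fun _ => ⟨hl, hsub⟩⟩
  choose F hF using hinterval
  obtain ⟨c, hc⟩ := exists_not_bddAbove_preimage_Iic_of_lt_self hsup fun x hx => (hF x hx).1
  rw [not_bddAbove_iff] at hc
  obtain ⟨x₀, hx₀c, hcx₀⟩ := hc c
  refine ⟨x₀, mem_atTop_sets.2 ⟨x₀, fun y hy => ?_⟩⟩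
  obtain ⟨x, hxc, hx⟩ := hc y
  have hx_not_min : ¬IsMin x := not_isMin_of_lt (hcx₀.trans_le (hy.trans hx.le))
  have hsub := (hF x hx_not_min).2
  have hx₀ : x₀ ∈ ball x V := hsub ⟨(mem_Iic.1 hxc).trans_lt hcx₀, hy.trans hx.le⟩
  have hy' : y ∈ ball x V := hsub ⟨(mem_Iic.1 hxc).trans_lt (hcx₀.trans_le hy), hx.le⟩
  exact hVE (mem_comp_of_mem_ball hx₀ hy')

theorem exists_forall_mem_iUnion_eq_univ_of_countable_compl {X : Type*} [Nonempty X]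
    {𝒰 : ℕ → Set (Set X)} (hcover : ∀ n, ⋃₀ 𝒰 n = univ) {U₀ : Set X} (hU₀ : U₀ ∈ 𝒰 0)
    (hcount : U₀ᶜ.Countable) : ∃ U : ℕ → Set X, (∀ n, U n ∈ 𝒰 n) ∧ ⋃ n, U n = univ := by
  choose pick pick_mem mem_pick using fun n x => mem_sUnion.1 (hcover n ▸ mem_univ x)
  obtain ⟨p, hp⟩ := (hcount.insert (Classical.arbitrary X)).exists_eq_range (insert_nonempty _ _)
  refine ⟨fun | 0 => U₀ | n + 1 => pick (n + 1) (p n), fun | 0 => hU₀ | n + 1 => pick_mem _ _, ?_⟩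
  refine eq_univ_of_forall fun x => ?_
  by_cases hx : x ∈ U₀
  · exact mem_iUnion_of_mem 0 hx
  · obtain ⟨n, rfl⟩ : x ∈ range p := hp ▸ mem_insert_of_mem _ hx
    exact mem_iUnion_of_mem (n + 1) (mem_pick _ _)

namespace Omega1

instance : Nonempty Omega1 := ⟨⟨0, Ordinal.omega_pos 1⟩⟩

instance : NoMaxOrder Omega1 :=
  ⟨fun x => ⟨⟨Order.succ x.1, (Cardinal.isSuccLimit_omega 1).succ_lt x.2⟩, Order.lt_succ x.1⟩⟩

theorem exists_isLUB_range (β : ℕ → Omega1) : ∃ b, IsLUB (range β) b :=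
  ⟨⟨⨆ n, (β n).1, Ordinal.iSup_lt_omega_one fun n => (β n).2⟩,
    forall_mem_range.2 fun n => Ordinal.le_iSup (fun n => (β n).1) n,
    fun _ hu => Ordinal.iSup_le fun n => hu (mem_range_self n)⟩

theorem countable_Iio (x : Omega1) : (Iio x).Countable := by
  have hx : (Iio x.1).Countable := by
    rw [← Cardinal.le_aleph0_iff_set_countable, Cardinal.mk_Iio_ordinal,
      ← Cardinal.lift_aleph0.{1, 0}, Cardinal.lift_le, ← Cardinal.lt_aleph_one_iff,
      ← Cardinal.lt_omega_iff_card_lt]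
    exact x.2
  exact hx.preimage Subtype.val_injective

theorem countable_compl_of_mem_atTop {s : Set Omega1} (hs : s ∈ atTop) : sᶜ.Countable := by
  obtain ⟨a, ha⟩ := mem_atTop_sets.1 hs
  exact (countable_Iio a).mono fun x hx => not_le.1 fun hax => hx (ha x hax)

theorem exists_countable_compl_of_uniform_cover (𝔘 : UniformSpace Omega1)
    (hcompat : 𝔘.toTopologicalSpace = omega1OrderTopology) (𝒰 : Set (Set Omega1))
    (hunif : ∃ E ∈ 𝔘.uniformity, ∀ x : Omega1, ∃ U ∈ 𝒰, {y | (x, y) ∈ E} ⊆ U) :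
    ∃ U ∈ 𝒰, Uᶜ.Countable := by
  let := 𝔘
  have : OrderTopology Omega1 := ⟨hcompat⟩
  obtain ⟨E, hE, hball⟩ := hunif
  obtain ⟨x₀, hx₀⟩ := exists_ball_mem_atTop exists_isLUB_range hE
  obtain ⟨U, hU, hsub⟩ := hball x₀
  exact ⟨U, hU, countable_compl_of_mem_atTop (mem_of_superset hx₀ hsub)⟩

end Omega1

theorem stmt_18 (𝔘 : UniformSpace Omega1)
    (hcompat : 𝔘.toTopologicalSpace = omega1OrderTopology) :
    (∀ 𝒰 : Set (Set Omega1), (∀ U ∈ 𝒰, @IsOpen _ omega1OrderTopology U) →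
      ⋃₀ 𝒰 = Set.univ →
      (∃ E ∈ 𝔘.uniformity, ∀ x : Omega1, ∃ U ∈ 𝒰, {y | (x, y) ∈ E} ⊆ U) →
      ∃ U ∈ 𝒰, (Uᶜ : Set Omega1).Countable) ∧
    ∀ 𝒰 : ℕ → Set (Set Omega1),
      (∀ n, (∀ U ∈ 𝒰 n, @IsOpen _ omega1OrderTopology U) ∧ ⋃₀ 𝒰 n = Set.univ ∧
        ∃ E ∈ 𝔘.uniformity, ∀ x : Omega1, ∃ U ∈ 𝒰 n, {y | (x, y) ∈ E} ⊆ U) →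
      ∃ U : ℕ → Set Omega1, (∀ n, U n ∈ 𝒰 n) ∧ ⋃ n, U n = Set.univ := by
  refine ⟨fun 𝒰 _ _ => Omega1.exists_countable_compl_of_uniform_cover 𝔘 hcompat 𝒰, fun 𝒰 h𝒰 => ?_⟩
  obtain ⟨U₀, hU₀, hcount⟩ := Omega1.exists_countable_compl_of_uniform_cover 𝔘 hcompat _ (h𝒰 0).2.2
  exact exists_forall_mem_iUnion_eq_univ_of_countable_compl (fun n => (h𝒰 n).2.1) hU₀ hcount
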